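/- Let C = {[x_0:x_1:x_2] ∈ ℂP² : x_0² + x_1² + x_2² = 0} be the standard smooth conic and let ω_FS denote the Fubini–Study Kähler form on ℂP². Then for all indices 0 ≤ λ, μ ≤ 2 one has ∫_C (x_λ x̄_μ / |x|²) ω_FS = (2/3) δ_{λμ}, where |x|² = |x_0|² + |x_1|² + |x_2|² and δ_{λμ} is the Kronecker delta (the integrand is well defined since it is invariant under scaling of homogeneous coordinates). -/

import Mathlib

open MeasureTheory

/-!
Since `|x(z)|² = 2(1 + |z|²)²`, the integrand becomes
`x_λ(z) x̄_μ(z) / (π (1 + |z|²)⁴)`. Each `x_λ` is a polynomial `∑ₐ P_{λa} zᵃ` of degree `≤ 2`.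
Rotating `z` by a unit complex number shows that `zᵃ z̄ᵇ` integrates to zero against a radial
weight unless `a = b`, and the diagonal moments `∫ |z|^{2a} / (π (1 + |z|²)⁴)` equal
`1/3, 1/6, 1/3`, all obtained in polar coordinates from `∫_ℂ (1 + |z|²)⁻ⁿ = π / (n - 1)`.
The integral is therefore the entry `(λ, μ)` of `P · diag(1/3, 1/6, 1/3) · Pᴴ = (2/3) · 1`.
-/

/-- Parametrization of the smooth conic `C = {x₀² + x₁² + x₂² = 0} ⊂ ℂP²` by the affine
chart `z ↦ [z : 1]` of `ℂP¹`: indeed `(z²-1)² + (i(z²+1))² + (-2z)² = 0`.  Under this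
parametrization the Fubini–Study form of `ℂP²` (normalized so lines have area `1`)
pulls back to the density `(2/π)(1+|z|²)^{-2}` with respect to Lebesgue measure on `ℂ`,
since `|x(z)|² = 2(1+|z|²)²`. -/
noncomputable def conicParam (z : ℂ) : Fin 3 → ℂ :=
  ![z ^ 2 - 1, Complex.I * (z ^ 2 + 1), -2 * z]

open Complex ComplexConjugate Set Filter Real Matrix Topology

lemma integral_complex_fun_norm (f : ℝ → ℝ) :
    ∫ z : ℂ, f ‖z‖ = 2 * π * ∫ r in Ioi (0 : ℝ), r * f r := by
  rw [integral_fun_norm_addHaar volume f]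
  simp only [finrank_real_complex, Measure.real, Complex.volume_ball, ENNReal.ofReal_one, one_pow,
    one_mul, ENNReal.coe_toReal, NNReal.coe_real_pi, Nat.add_one_sub_one, pow_one, smul_eq_mul,
    nsmul_eq_mul, Nat.cast_ofNat]
  ring

lemma integrable_inv_one_add_norm_sq_pow {E : Type*} [NormedAddCommGroup E] [NormedSpace ℝ E]
    [FiniteDimensional ℝ E] [MeasurableSpace E] [BorelSpace E] (μ : Measure E)
    [μ.IsAddHaarMeasure] {n : ℕ} (hn : Module.finrank ℝ E < 2 * n) :
    Integrable (fun x : E => ((1 + ‖x‖ ^ 2) ^ n)⁻¹) μ := by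
  refine (integrable_rpow_neg_one_add_norm_sq (μ := μ) (r := 2 * n) (by exact_mod_cast hn)).congr
    (Eventually.of_forall fun x => ?_)
  simp only
  rw [neg_div, mul_div_cancel_left₀ _ two_ne_zero, Real.rpow_neg (by positivity),
    Real.rpow_natCast]

lemma integrable_inv_one_add_norm_sq_pow_of_two_le {n : ℕ} (hn : 2 ≤ n) :
    Integrable fun z : ℂ => ((1 + ‖z‖ ^ 2) ^ n)⁻¹ :=
  integrable_inv_one_add_norm_sq_pow volume (by rw [Complex.finrank_real_complex]; omega)

lemma hasDerivAt_neg_inv_one_add_sq_pow_div (m : ℕ) (r : ℝ) :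
    HasDerivAt (fun r : ℝ => -((1 + r ^ 2) ^ (m + 1))⁻¹ / (2 * ((m : ℝ) + 1)))
      (r * ((1 + r ^ 2) ^ (m + 2))⁻¹) r := by
  have h1 : HasDerivAt (fun r : ℝ => 1 + r ^ 2) (2 * r) r := by
    simpa using (hasDerivAt_pow 2 r).const_add 1
  refine (((h1.fun_pow (m + 1)).inv (by positivity)).neg.div_const _).congr_deriv ?_
  rw [add_tsub_cancel_right]
  field_simp
  push_cast
  ring

lemma integral_Ioi_mul_inv_one_add_sq_pow (m : ℕ) :
    ∫ r in Ioi (0 : ℝ), r * ((1 + r ^ 2) ^ (m + 2))⁻¹ = 1 / (2 * (m + 1)) := by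
  have hlim : Tendsto (fun r : ℝ => -((1 + r ^ 2) ^ (m + 1))⁻¹ / (2 * ((m : ℝ) + 1)))
      atTop (𝓝 0) := by
    have : Tendsto (fun r : ℝ => (1 + r ^ 2) ^ (m + 1)) atTop atTop :=
      (tendsto_pow_atTop m.succ_ne_zero).comp
        (tendsto_atTop_add_const_left _ 1 (tendsto_pow_atTop two_ne_zero))
    simpa using (tendsto_inv_atTop_zero.comp this).neg.div_const (2 * (m + 1 : ℝ))
  rw [integral_Ioi_of_hasDerivAt_of_nonneg'
    (fun r _ => hasDerivAt_neg_inv_one_add_sq_pow_div m r)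
    (fun r (hr : 0 < r) => by positivity) hlim]
  norm_num
  field_simp

lemma integral_inv_one_add_norm_sq_pow {n : ℕ} (hn : 2 ≤ n) :
    ∫ z : ℂ, ((1 + ‖z‖ ^ 2) ^ n)⁻¹ = π / (n - 1) := by
  obtain ⟨m, rfl⟩ : ∃ m, n = m + 2 := ⟨n - 2, by omega⟩
  rw [integral_complex_fun_norm fun r => ((1 + r ^ 2) ^ (m + 2))⁻¹,
    integral_Ioi_mul_inv_one_add_sq_pow, show ((m + 2 : ℕ) : ℝ) - 1 = m + 1 by push_cast; ring]
  field_simp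

lemma integral_inv_one_add_norm_sq_pow_four :
    ∫ z : ℂ, ((1 + ‖z‖ ^ 2) ^ 4)⁻¹ = π / 3 := by
  rw [integral_inv_one_add_norm_sq_pow (by norm_num)]
  norm_num

lemma integral_norm_sq_mul_inv_one_add_norm_sq_pow_four :
    ∫ z : ℂ, ‖z‖ ^ 2 * ((1 + ‖z‖ ^ 2) ^ 4)⁻¹ = π / 6 := by
  have h (z : ℂ) : ‖z‖ ^ 2 * ((1 + ‖z‖ ^ 2) ^ 4)⁻¹
      = ((1 + ‖z‖ ^ 2) ^ 3)⁻¹ - ((1 + ‖z‖ ^ 2) ^ 4)⁻¹ := by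
    field_simp
    ring
  simp_rw [h]
  rw [integral_sub (integrable_inv_one_add_norm_sq_pow_of_two_le (by norm_num))
    (integrable_inv_one_add_norm_sq_pow_of_two_le (by norm_num)),
    integral_inv_one_add_norm_sq_pow (by norm_num), integral_inv_one_add_norm_sq_pow (by norm_num)]
  norm_num
  ring

lemma integral_norm_sq_sq_mul_inv_one_add_norm_sq_pow_four :
    ∫ z : ℂ, (‖z‖ ^ 2) ^ 2 * ((1 + ‖z‖ ^ 2) ^ 4)⁻¹ = π / 3 := by
  have h (z : ℂ) : (‖z‖ ^ 2) ^ 2 * ((1 + ‖z‖ ^ 2) ^ 4)⁻¹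
      = ((1 + ‖z‖ ^ 2) ^ 2)⁻¹ - 2 * ((1 + ‖z‖ ^ 2) ^ 3)⁻¹ + ((1 + ‖z‖ ^ 2) ^ 4)⁻¹ := by
    field_simp
    ring
  have hint {n : ℕ} (hn : 2 ≤ n) := integrable_inv_one_add_norm_sq_pow_of_two_le hn
  simp_rw [h]
  rw [integral_add ?_ (hint (by norm_num)),
    integral_sub (hint le_rfl) ((hint (by norm_num)).const_mul 2), integral_const_mul,
    integral_inv_one_add_norm_sq_pow le_rfl, integral_inv_one_add_norm_sq_pow (by norm_num),
    integral_inv_one_add_norm_sq_pow (by norm_num)]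
  · norm_num
    ring
  · exact (hint le_rfl).sub ((hint (by norm_num)).const_mul 2)

lemma integral_comp_circle_mul {E : Type*} [NormedAddCommGroup E] [NormedSpace ℝ E]
    (c : Circle) (f : ℂ → E) : ∫ z, f (c * z) = ∫ z, f z :=
  (rotation c).measurePreserving.integral_comp (rotation c).toHomeomorph.measurableEmbedding f

lemma exists_circle_pow_mul_conj_pow_eq_neg_one {a b : ℕ} (hab : a ≠ b) :
    ∃ c : Circle, (c : ℂ) ^ a * conj (c : ℂ) ^ b = -1 := by
  have hab' : (a : ℂ) - b ≠ 0 := sub_ne_zero.mpr (by exact_mod_cast hab)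
  refine ⟨Circle.exp (π / (a - b)), ?_⟩
  rw [Circle.coe_exp, ← Complex.exp_conj, ← Complex.exp_nat_mul, ← Complex.exp_nat_mul,
    ← Complex.exp_add, ← exp_pi_mul_I]
  congr 1
  simp only [map_mul, conj_ofReal, conj_I]
  push_cast
  field_simp
  ring

lemma integral_pow_mul_conj_pow_mul_radial_eq_zero {a b : ℕ} (hab : a ≠ b) (g : ℝ → ℂ) :
    ∫ z : ℂ, z ^ a * conj z ^ b * g ‖z‖ = 0 := by
  obtain ⟨c, hc⟩ := exists_circle_pow_mul_conj_pow_eq_neg_one hab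
  have hrot (z : ℂ) : (c * z) ^ a * conj (c * z) ^ b * g ‖c * z‖
      = -(z ^ a * conj z ^ b * g ‖z‖) := by
    rw [norm_mul, Circle.norm_coe, one_mul, map_mul, mul_pow, mul_pow, neg_eq_neg_one_mul, ← hc]
    ring
  have h := integral_comp_circle_mul c fun z : ℂ => z ^ a * conj z ^ b * g ‖z‖
  simp only [hrot, integral_neg] at h
  exact CharZero.eq_neg_self_iff.mp h.symm

lemma sum_norm_conicParam_sq (z : ℂ) :
    ∑ k, ‖conicParam z k‖ ^ 2 = 2 * (1 + ‖z‖ ^ 2) ^ 2 := by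
  simp only [Fin.sum_univ_three, conicParam, Matrix.cons_val_zero, Matrix.cons_val_one,
    Matrix.cons_val_two, Matrix.head_cons, Matrix.tail_cons, Complex.sq_norm]
  simp only [Complex.normSq_apply, sub_re, sub_im, add_re, add_im, mul_re, mul_im, I_re, I_im,
    one_re, one_im, neg_re, neg_im, pow_two]
  norm_num
  ring

noncomputable def conicWeight (z : ℂ) : ℝ := (π * (1 + ‖z‖ ^ 2) ^ 4)⁻¹

lemma conicWeight_eq (z : ℂ) : conicWeight z = π⁻¹ * ((1 + ‖z‖ ^ 2) ^ 4)⁻¹ := mul_inv _ _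

lemma continuous_conicWeight : Continuous conicWeight :=
  Continuous.inv₀ (by fun_prop) fun z => by positivity

lemma conicIntegrand_eq (lam mu : Fin 3) (z : ℂ) :
    conicParam z lam * conj (conicParam z mu) / (∑ k, ((‖conicParam z k‖ : ℝ) : ℂ) ^ 2)
        * (((2 / (π * (1 + ‖z‖ ^ 2) ^ 2)) : ℝ) : ℂ)
      = conicParam z lam * conj (conicParam z mu) * (conicWeight z : ℂ) := by
  have hsum : ∑ k, ((‖conicParam z k‖ : ℝ) : ℂ) ^ 2 = ((2 * (1 + ‖z‖ ^ 2) ^ 2 : ℝ) : ℂ) := by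
    rw [← sum_norm_conicParam_sq]
    push_cast
    rfl
  have h1 : (1 + ‖z‖ ^ 2 : ℝ) ≠ 0 := by positivity
  rw [hsum, conicWeight]
  push_cast
  field_simp

lemma pow_le_one_add_sq {r : ℝ} (hr : 0 ≤ r) {a : ℕ} (ha : a ≤ 2) : r ^ a ≤ 1 + r ^ 2 := by
  interval_cases a <;> nlinarith

lemma integrable_pow_mul_conj_pow_mul_conicWeight {a b : ℕ} (ha : a ≤ 2) (hb : b ≤ 2) :
    Integrable fun z : ℂ => z ^ a * conj z ^ b * (conicWeight z : ℂ) := by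
  have hc : Continuous fun z : ℂ => z ^ a * conj z ^ b * (conicWeight z : ℂ) := by
    have := continuous_conicWeight
    have := Complex.continuous_conj
    fun_prop
  refine ((integrable_inv_one_add_norm_sq_pow_of_two_le le_rfl).const_mul π⁻¹).mono'
    hc.aestronglyMeasurable (Eventually.of_forall fun z => ?_)
  have h1 : (0 : ℝ) < 1 + ‖z‖ ^ 2 := by positivity
  have hab : ‖z‖ ^ a * ‖z‖ ^ b ≤ (1 + ‖z‖ ^ 2) ^ 2 := by
    rw [sq]
    exact mul_le_mul (pow_le_one_add_sq (norm_nonneg z) ha)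
      (pow_le_one_add_sq (norm_nonneg z) hb) (by positivity) h1.le
  rw [norm_mul, norm_mul, norm_pow, norm_pow, RCLike.norm_conj, Complex.norm_real,
    Real.norm_of_nonneg (by unfold conicWeight; positivity), conicWeight_eq]
  calc ‖z‖ ^ a * ‖z‖ ^ b * (π⁻¹ * ((1 + ‖z‖ ^ 2) ^ 4)⁻¹)
      ≤ (1 + ‖z‖ ^ 2) ^ 2 * (π⁻¹ * ((1 + ‖z‖ ^ 2) ^ 4)⁻¹) := by gcongr
    _ = π⁻¹ * ((1 + ‖z‖ ^ 2) ^ 2)⁻¹ := by field_simp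

noncomputable def conicMoment : Fin 3 → ℂ := ![1 / 3, 1 / 6, 1 / 3]

lemma integral_pow_mul_conj_pow_mul_conicWeight (a b : Fin 3) :
    ∫ z : ℂ, z ^ (a : ℕ) * conj z ^ (b : ℕ) * (conicWeight z : ℂ)
      = if a = b then conicMoment a else 0 := by
  split_ifs with hab
  · subst hab
    have h (z : ℂ) : z ^ (a : ℕ) * conj z ^ (a : ℕ) * (conicWeight z : ℂ)
        = (((‖z‖ ^ 2) ^ (a : ℕ) * conicWeight z : ℝ) : ℂ) := by
      rw [← mul_pow, Complex.mul_conj, Complex.normSq_eq_norm_sq]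
      push_cast
      ring
    simp_rw [h, integral_complex_ofReal, conicWeight_eq, mul_left_comm _ π⁻¹, integral_const_mul]
    fin_cases a <;> simp [conicMoment, integral_inv_one_add_norm_sq_pow_four,
      integral_norm_sq_mul_inv_one_add_norm_sq_pow_four,
      integral_norm_sq_sq_mul_inv_one_add_norm_sq_pow_four] <;> field_simp
  · exact integral_pow_mul_conj_pow_mul_radial_eq_zero (Fin.val_injective.ne hab)
      fun r => ((π * (1 + r ^ 2) ^ 4)⁻¹ : ℝ)

noncomputable def conicCoeff : Matrix (Fin 3) (Fin 3) ℂ := !![-1, 0, 1; I, 0, I; 0, -2, 0]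

lemma conicParam_eq_sum (z : ℂ) (i : Fin 3) :
    conicParam z i = ∑ a : Fin 3, conicCoeff i a * z ^ (a : ℕ) := by
  fin_cases i <;> simp [conicParam, conicCoeff, Fin.sum_univ_three] <;> ring

lemma conicCoeff_mul_diagonal_mul_conjTranspose :
    conicCoeff * diagonal conicMoment * conicCoeffᴴ = (2 / 3 : ℂ) • 1 := by
  ext i j
  rw [mul_apply]
  simp only [mul_diagonal, conjTranspose_apply, Fin.sum_univ_three]
  fin_cases i <;> fin_cases j <;> simp [conicCoeff, conicMoment, one_apply, Complex.ext_iff] <;>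
    norm_num

lemma conicParam_mul_conj_mul_conicWeight (lam mu : Fin 3) (z : ℂ) :
    conicParam z lam * conj (conicParam z mu) * (conicWeight z : ℂ)
      = ∑ a, ∑ b, conicCoeff lam a * conj (conicCoeff mu b)
          * (z ^ (a : ℕ) * conj z ^ (b : ℕ) * (conicWeight z : ℂ)) := by
  rw [conicParam_eq_sum, conicParam_eq_sum, map_sum, Finset.sum_mul_sum, Finset.sum_mul]
  refine Finset.sum_congr rfl fun a _ => ?_
  rw [Finset.sum_mul]
  refine Finset.sum_congr rfl fun b _ => ?_
  rw [map_mul, map_pow]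
  ring

/-- For the standard smooth conic `C ⊂ ℂP²` and the Fubini–Study form `ω_FS`,
`∫_C (x_λ x̄_μ / |x|²) ω_FS = (2/3) δ_{λμ}`, expressed via the parametrization
`conicParam` (which covers `C` up to a single point, a set of measure zero). -/
theorem conic_fubiniStudy_integral (lam mu : Fin 3) :
    (∫ z : ℂ,
        (conicParam z lam * (starRingEnd ℂ) (conicParam z mu)
            / (∑ k, ((‖conicParam z k‖ : ℝ) : ℂ) ^ 2))
          * (((2 / (Real.pi * (1 + ‖z‖ ^ 2) ^ 2)) : ℝ) : ℂ))
      = if lam = mu then (2 / 3 : ℂ) else 0 := by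
  have hint (a b : Fin 3) := integrable_pow_mul_conj_pow_mul_conicWeight
    (a := a) (b := b) (by omega) (by omega)
  calc _ = ∑ a, ∑ b, conicCoeff lam a * conj (conicCoeff mu b)
          * ∫ z : ℂ, z ^ (a : ℕ) * conj z ^ (b : ℕ) * (conicWeight z : ℂ) := by
        simp_rw [conicIntegrand_eq, conicParam_mul_conj_mul_conicWeight]
        rw [integral_finsetSum _ fun a _ => integrable_finsetSum _ fun b _ =>
          (hint a b).const_mul _]
        refine Finset.sum_congr rfl fun a _ => ?_
        rw [integral_finsetSum _ fun b _ => (hint a b).const_mul _]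
        simp_rw [integral_const_mul]
    _ = (conicCoeff * diagonal conicMoment * conicCoeffᴴ) lam mu := by
        simp only [integral_pow_mul_conj_pow_mul_conicWeight, mul_ite, mul_zero,
          Finset.sum_ite_eq, Finset.mem_univ, if_true]
        rw [mul_apply]
        simp only [mul_diagonal]
        exact Finset.sum_congr rfl fun a _ => by rw [conjTranspose_apply, Complex.star_def]; ring
    _ = _ := by
        rw [conicCoeff_mul_diagonal_mul_conjTranspose]
        simp [one_apply]
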